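/- arXiv:1706.03334 — 7 statements merged into one kernel-verified Lean document; each statement's English description precedes it below -/
import Mathlib

section
/- For all real x with 0 < x ≤ 1 and p ∈ [-1,1] with p ≠ 0, one has ((x^p + 1)/2) · log x ≤ (x^p − 1)/p ≤ x^(p/2) · log x. -/
/-! With `u = p log x` we have `x ^ p = exp u` and `(x ^ p - 1) / p = log x * (exp u - 1) / u`.
The logarithmic mean of `1` and `exp u` lies between their geometric and arithmetic means,
`exp (u / 2) ≤ (exp u - 1) / u ≤ (exp u + 1) / 2`; after factoring out `exp (u / 2)` this is
`1 ≤ sinh t / t ≤ cosh t` for `t = u / 2`. Multiplying by `log x ≤ 0` reverses both inequalities. -/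

open Real

namespace Real

theorem monotone_mul_cosh_sub_sinh : Monotone fun t : ℝ => t * cosh t - sinh t := by
  have hderiv (t : ℝ) : HasDerivAt (fun t : ℝ => t * cosh t - sinh t) (t * sinh t) t :=
    (((hasDerivAt_id' t).mul (hasDerivAt_cosh t)).sub (hasDerivAt_sinh t)).congr_deriv
      (by ring)
  refine monotone_of_deriv_nonneg (fun t => (hderiv t).differentiableAt) fun t => ?_
  rw [(hderiv t).deriv]
  rcases le_total 0 t with ht | ht
  · exact mul_nonneg ht (sinh_nonneg_iff.2 ht)
  · exact mul_nonneg_of_nonpos_of_nonpos ht (sinh_nonpos_iff.2 ht)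

theorem one_le_sinh_div_self {t : ℝ} (ht : t ≠ 0) : 1 ≤ sinh t / t := by
  rcases ht.lt_or_gt with ht | ht
  · rw [le_div_iff_of_neg ht, one_mul]
    exact sinh_le_self_iff.2 ht.le
  · rw [le_div_iff₀ ht, one_mul]
    exact self_le_sinh_iff.2 ht.le

theorem sinh_div_self_le_cosh {t : ℝ} (ht : t ≠ 0) : sinh t / t ≤ cosh t := by
  rcases ht.lt_or_gt with ht | ht
  · have := monotone_mul_cosh_sub_sinh ht.le
    simp only [zero_mul, sinh_zero, sub_zero, sub_nonpos] at this
    rw [div_le_iff_of_neg ht]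
    linarith
  · have := monotone_mul_cosh_sub_sinh ht.le
    simp only [zero_mul, sinh_zero, sub_zero, sub_nonneg] at this
    rw [div_le_iff₀ ht]
    linarith

theorem exp_sub_one_div_eq_exp_half_mul {u : ℝ} (hu : u ≠ 0) :
    (exp u - 1) / u = exp (u / 2) * (sinh (u / 2) / (u / 2)) := by
  have hexp : exp u = exp (u / 2) * exp (u / 2) := by rw [← exp_add, add_halves]
  rw [sinh_eq, exp_neg, hexp]
  field_simp

theorem exp_add_one_div_two_eq_exp_half_mul (u : ℝ) :
    (exp u + 1) / 2 = exp (u / 2) * cosh (u / 2) := by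
  have hexp : exp u = exp (u / 2) * exp (u / 2) := by rw [← exp_add, add_halves]
  rw [cosh_eq, exp_neg, hexp]
  field_simp

theorem exp_half_le_exp_sub_one_div {u : ℝ} (hu : u ≠ 0) : exp (u / 2) ≤ (exp u - 1) / u := by
  rw [exp_sub_one_div_eq_exp_half_mul hu]
  exact le_mul_of_one_le_right (exp_pos _).le (one_le_sinh_div_self (div_ne_zero hu two_ne_zero))

theorem exp_sub_one_div_le_exp_add_one_div_two {u : ℝ} (hu : u ≠ 0) :
    (exp u - 1) / u ≤ (exp u + 1) / 2 := by
  rw [exp_sub_one_div_eq_exp_half_mul hu, exp_add_one_div_two_eq_exp_half_mul]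
  exact mul_le_mul_of_nonneg_left (sinh_div_self_le_cosh (div_ne_zero hu two_ne_zero))
    (exp_pos _).le

end Real

theorem stmt_1_general (x p : ℝ) (hx0 : 0 < x) (hx1 : x ≤ 1)
    (hp0 : p ≠ 0) :
    ((x ^ p + 1) / 2) * Real.log x ≤ (x ^ p - 1) / p ∧
    (x ^ p - 1) / p ≤ x ^ (p / 2) * Real.log x := by
  rcases hx1.eq_or_lt with rfl | hx1
  · simp
  have hlog : log x < 0 := log_neg hx0 hx1
  set u := log x * p with hu_def
  have hu : u ≠ 0 := mul_ne_zero hlog.ne hp0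
  have hpow : x ^ p = exp u := rpow_def_of_pos hx0 p
  have hpow_half : x ^ (p / 2) = exp (u / 2) := by rw [rpow_def_of_pos hx0, mul_div_assoc]
  have hquot : (x ^ p - 1) / p = log x * ((exp u - 1) / u) := by
    rw [hpow, hu_def, mul_div_assoc', mul_div_mul_left _ _ hlog.ne]
  rw [hquot, hpow, hpow_half, mul_comm _ (log x), mul_comm _ (log x)]
  exact ⟨mul_le_mul_of_nonpos_left (exp_sub_one_div_le_exp_add_one_div_two hu) hlog.le,
    mul_le_mul_of_nonpos_left (exp_half_le_exp_sub_one_div hu) hlog.le⟩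

theorem stmt_1 (x p : ℝ) (hx0 : 0 < x) (hx1 : x ≤ 1)
    (hp : p ∈ Set.Icc (-1 : ℝ) 1) (hp0 : p ≠ 0) :
    ((x ^ p + 1) / 2) * Real.log x ≤ (x ^ p - 1) / p ∧
    (x ^ p - 1) / p ≤ x ^ (p / 2) * Real.log x :=
  stmt_1_general x p hx0 hx1 hp0
end

section
/- Define for t ≥ 1 and p ∈ [-1,1], p ≠ 0, p ≠ 1: l_p(t) = (1/2)((t^p − 1)/p − (t^{p−1} − 1)/(p−1)) and k_p(t) = (4/p)(((t+1)/2)^p − 1) − (4/(p−1))(((t+1)/2)^{p−1} − 1). Then l_p(t) ≤ k_p(t) for all t ≥ 1. -/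
/-!
With `g s = boxCoxDiff p s = (s ^ p - 1) / p - (s ^ (p - 1) - 1) / (p - 1)` we have
`l_p t = g t / 2` and `k_p t = 4 g ((t + 1) / 2)`. Since `g' s = s ^ (p - 2) (s - 1)`, the difference
`h = k_p - l_p` has `h' t = (t - 1) (((t + 1) / 2) ^ (p - 2) - t ^ (p - 2) / 2)`, which is
nonnegative for `t ≥ 1` because `(t + 1) / 2 ≤ t` and `p - 2 ≤ 0`. As `h 1 = 0`, `h ≥ 0` on `[1, ∞)`.
-/

open Real Set

noncomputable section

def boxCox (p s : ℝ) : ℝ := (s ^ p - 1) / p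

def boxCoxDiff (p s : ℝ) : ℝ := boxCox p s - boxCox (p - 1) s

@[simp]
lemma boxCox_one (p : ℝ) : boxCox p 1 = 0 := by
  simp [boxCox]

@[simp]
lemma boxCoxDiff_one (p : ℝ) : boxCoxDiff p 1 = 0 := by
  simp [boxCoxDiff]

lemma hasDerivAt_boxCox {p s : ℝ} (hp : p ≠ 0) (hs : 0 < s) :
    HasDerivAt (boxCox p) (s ^ (p - 1)) s := by
  have := ((hasDerivAt_rpow_const (p := p) (Or.inl hs.ne')).sub_const 1).div_const p
  rwa [mul_div_cancel_left₀ _ hp] at this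

lemma hasDerivAt_boxCoxDiff {p s : ℝ} (hp0 : p ≠ 0) (hp1 : p ≠ 1) (hs : 0 < s) :
    HasDerivAt (boxCoxDiff p) (s ^ (p - 2) * (s - 1)) s := by
  have h := (hasDerivAt_boxCox hp0 hs).sub (hasDerivAt_boxCox (sub_ne_zero.mpr hp1) hs)
  have hpow : s ^ (p - 1) = s ^ (p - 2) * s := by
    rw [← rpow_add_one hs.ne']
    ring_nf
  refine h.congr_deriv ?_
  rw [hpow, show p - 1 - 1 = p - 2 by ring]
  ring

lemma hasDerivAt_boxCoxDiff_midpoint_sub {p x : ℝ} (hp0 : p ≠ 0) (hp1 : p ≠ 1) (hx : 0 < x) :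
    HasDerivAt (fun t => 4 * boxCoxDiff p ((t + 1) / 2) - boxCoxDiff p t / 2)
      ((x - 1) * (((x + 1) / 2) ^ (p - 2) - x ^ (p - 2) / 2)) x := by
  have hmid : HasDerivAt (fun t : ℝ => (t + 1) / 2) (1 / 2) x :=
    ((hasDerivAt_id x).add_const 1).div_const 2
  have h := (((hasDerivAt_boxCoxDiff hp0 hp1 (by linarith : 0 < (x + 1) / 2)).comp x
    hmid).const_mul 4).sub ((hasDerivAt_boxCoxDiff hp0 hp1 hx).div_const 2)
  refine h.congr_deriv ?_
  ring

lemma boxCoxDiff_midpoint_deriv_nonneg {p x : ℝ} (hp : p ≤ 2) (hx : 1 ≤ x) :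
    0 ≤ (x - 1) * (((x + 1) / 2) ^ (p - 2) - x ^ (p - 2) / 2) := by
  have hpow_pos : 0 < x ^ (p - 2) := rpow_pos_of_pos (by linarith) _
  have hpow_le : x ^ (p - 2) ≤ ((x + 1) / 2) ^ (p - 2) :=
    rpow_le_rpow_of_nonpos (by linarith) (by linarith) (by linarith)
  exact mul_nonneg (by linarith) (by linarith)

lemma half_boxCoxDiff_le_four_mul_boxCoxDiff_midpoint {p t : ℝ} (hp0 : p ≠ 0) (hp1 : p ≠ 1)
    (hp : p ≤ 2) (ht : 1 ≤ t) :
    boxCoxDiff p t / 2 ≤ 4 * boxCoxDiff p ((t + 1) / 2) := by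
  have hderiv : ∀ x ∈ Ici (1 : ℝ), HasDerivAt
      (fun t => 4 * boxCoxDiff p ((t + 1) / 2) - boxCoxDiff p t / 2)
      ((x - 1) * (((x + 1) / 2) ^ (p - 2) - x ^ (p - 2) / 2)) x :=
    fun x hx => hasDerivAt_boxCoxDiff_midpoint_sub hp0 hp1 (by linarith [mem_Ici.mp hx])
  have hmono := monotoneOn_of_hasDerivWithinAt_nonneg (convex_Ici 1)
    (fun x hx => (hderiv x hx).continuousAt.continuousWithinAt)
    (fun x hx => (hderiv x (interior_subset hx)).hasDerivWithinAt)
    (fun x hx => boxCoxDiff_midpoint_deriv_nonneg hp (interior_subset hx))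
  have := hmono self_mem_Ici ht ht
  simp only [show ((1 : ℝ) + 1) / 2 = 1 by norm_num, boxCoxDiff_one] at this
  linarith

end

theorem stmt_4 (t p : ℝ) (ht : 1 ≤ t) (hp : p ∈ Set.Icc (-1 : ℝ) 1)
    (hp0 : p ≠ 0) (hp1 : p ≠ 1) :
    (1 / 2) * ((t ^ p - 1) / p - (t ^ (p - 1) - 1) / (p - 1)) ≤
    (4 / p) * (((t + 1) / 2) ^ p - 1) - (4 / (p - 1)) * (((t + 1) / 2) ^ (p - 1) - 1) := by
  have h := half_boxCoxDiff_le_four_mul_boxCoxDiff_midpoint hp0 hp1 (by linarith [hp.2]) ht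
  simp only [boxCoxDiff, boxCox] at h
  convert h using 1 <;> ring
end

section
/- Define for t ≥ 1 and p ∈ (0,1): k_p(t) = (4/p)(((t+1)/2)^p − 1) − (4/(p−1))(((t+1)/2)^{p−1} − 1) and c_p(t) = (t^p − 1)/(p(p−1)) − (t−1)/(p−1). Then k_p(t) ≤ c_p(t). -/
/-!
Both sides vanish at `t = 1`, and `d/dt (c_p - k_p) = (t^(p-1) - 1)/(p-1) - (t-1)((t+1)/2)^(p-2)`.
The first term is `∫₁ᵗ y^(p-2) dy`, so this derivative is nonnegative by the left
Hermite–Hadamard inequality for the convex function `y ↦ y^(p-2)`.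
-/

open Real Set

lemma le_of_hasDerivAt_nonneg {f f' : ℝ → ℝ} {a b : ℝ} (hab : a ≤ b)
    (hf : ∀ x ∈ Icc a b, HasDerivAt f (f' x) x) (hf' : ∀ x ∈ Ioo a b, 0 ≤ f' x) :
    f a ≤ f b := by
  have hmono : MonotoneOn f (Icc a b) :=
    monotoneOn_of_hasDerivWithinAt_nonneg (convex_Icc a b)
      (fun x hx ↦ (hf x hx).continuousAt.continuousWithinAt)
      (fun x hx ↦ (hf x (interior_subset hx)).hasDerivWithinAt)
      (by simpa only [interior_Icc] using hf')
  exact hmono (left_mem_Icc.2 hab) (right_mem_Icc.2 hab) hab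

lemma convexOn_rpow_of_nonpos {q : ℝ} (hq : q ≤ 0) : ConvexOn ℝ (Ioi 0) fun x : ℝ ↦ x ^ q := by
  have hderiv {r x : ℝ} (hx : x ∈ interior (Ioi (0 : ℝ))) :
      HasDerivAt (fun x : ℝ ↦ x ^ r) (r * x ^ (r - 1)) x :=
    hasDerivAt_rpow_const (Or.inl (ne_of_gt (interior_subset hx)))
  refine convexOn_of_hasDerivWithinAt2_nonneg (convex_Ioi 0)
    (fun x hx ↦ (continuousAt_rpow_const _ _ (Or.inl (ne_of_gt hx))).continuousWithinAt)
    (fun x hx ↦ (hderiv hx).hasDerivWithinAt)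
    (fun x hx ↦ ((hderiv hx).const_mul q).hasDerivWithinAt) ?_
  intro x hx
  have hpow : 0 ≤ x ^ (q - 1 - 1) := (rpow_pos_of_pos (interior_subset hx) _).le
  exact mul_nonneg_of_nonpos_of_nonpos hq (mul_nonpos_of_nonpos_of_nonneg (by linarith) hpow)

/-- The left Hermite–Hadamard inequality. -/
theorem ConvexOn.sub_mul_apply_midpoint_le {a b : ℝ} {G g g' : ℝ → ℝ} (hab : a ≤ b)
    (hconv : ConvexOn ℝ (Icc a b) g) (hG : ∀ x ∈ Icc a b, HasDerivAt G (g x) x)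
    (hg : ∀ x ∈ Icc a b, HasDerivAt g (g' x) x) :
    (b - a) * g ((a + b) / 2) ≤ G b - G a := by
  have hmid {s : ℝ} (hs : s ∈ Icc a b) : (a + s) / 2 ∈ Icc a b :=
    ⟨by linarith [hs.1], by linarith [hs.1, hs.2]⟩
  -- As a function of the right endpoint, the gap has derivative `≥ 0`:
  -- this is the tangent line inequality at the midpoint.
  have key := le_of_hasDerivAt_nonneg hab
    (f := fun s ↦ G s - (s - a) * g ((a + s) / 2))
    (f' := fun s ↦ g s - g ((a + s) / 2) - (s - (a + s) / 2) * g' ((a + s) / 2))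
    (fun s hs ↦ by
      have hm : HasDerivAt (fun s ↦ (a + s) / 2) (1 / 2) s := by
        simpa using ((hasDerivAt_id s).const_add a).div_const 2
      refine ((hG s hs).sub (((hasDerivAt_id s).sub_const a).mul
        ((hg _ (hmid hs)).comp s hm))).congr_deriv ?_
      simp only [Function.comp_apply, id]; ring)
    (fun s hs ↦ by
      have hs' := Ioo_subset_Icc_self hs
      have hlt : (a + s) / 2 < s := by linarith [hs.1]
      have htangent := hconv.le_slope_of_hasDerivAt (hmid hs') hs' hlt (hg _ (hmid hs'))
      rw [slope_def_field, le_div_iff₀ (by linarith)] at htangent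
      linarith)
  simp only [sub_self, zero_mul, sub_zero] at key
  linarith

lemma sub_mul_rpow_midpoint_le {a b q : ℝ} (ha : 0 < a) (hab : a ≤ b) (hq0 : q ≠ 0)
    (hq1 : q ≤ 1) : (b - a) * ((a + b) / 2) ^ (q - 1) ≤ (b ^ q - a ^ q) / q := by
  have hne {x : ℝ} (hx : x ∈ Icc a b) : x ≠ 0 := by linarith [hx.1]
  have key := ConvexOn.sub_mul_apply_midpoint_le hab
    ((convexOn_rpow_of_nonpos (q := q - 1) (by linarith)).subset
      (fun x hx ↦ lt_of_lt_of_le ha hx.1) (convex_Icc a b))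
    (G := fun x ↦ x ^ q / q)
    (fun x hx ↦ ((hasDerivAt_rpow_const (Or.inl (hne hx))).div_const q).congr_deriv
      (by field_simp))
    (fun x hx ↦ hasDerivAt_rpow_const (Or.inl (hne hx)))
  rwa [← sub_div] at key

noncomputable def kp (p t : ℝ) : ℝ :=
  (4 / p) * (((t + 1) / 2) ^ p - 1) - (4 / (p - 1)) * (((t + 1) / 2) ^ (p - 1) - 1)

noncomputable def cp (p t : ℝ) : ℝ :=
  (t ^ p - 1) / (p * (p - 1)) - (t - 1) / (p - 1)

@[simp] lemma kp_one (p : ℝ) : kp p 1 = 0 := by norm_num [kp]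

@[simp] lemma cp_one (p : ℝ) : cp p 1 = 0 := by simp [cp]

lemma hasDerivAt_cp {p x : ℝ} (hp0 : p ≠ 0) (hp1 : p ≠ 1) (hx : 0 < x) :
    HasDerivAt (cp p) ((x ^ (p - 1) - 1) / (p - 1)) x := by
  have hp1' : p - 1 ≠ 0 := sub_ne_zero.2 hp1
  refine ((((hasDerivAt_rpow_const (Or.inl hx.ne')).sub_const 1).div_const (p * (p - 1))).sub
    (((hasDerivAt_id x).sub_const 1).div_const (p - 1))).congr_deriv ?_
  field_simp

lemma hasDerivAt_kp {p x : ℝ} (hp0 : p ≠ 0) (hp1 : p ≠ 1) (hx : -1 < x) :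
    HasDerivAt (kp p) ((x - 1) * ((x + 1) / 2) ^ (p - 2)) x := by
  have hp1' : p - 1 ≠ 0 := sub_ne_zero.2 hp1
  have hA : (x + 1) / 2 ≠ 0 := by linarith
  have hmid : HasDerivAt (fun x ↦ (x + 1) / 2) (1 / 2) x := by
    simpa using ((hasDerivAt_id x).add_const 1).div_const 2
  refine ((((hmid.rpow_const (Or.inl hA)).sub_const 1).const_mul (4 / p)).sub
    (((hmid.rpow_const (Or.inl hA)).sub_const 1).const_mul (4 / (p - 1)))).congr_deriv ?_
  have hpow : ((x + 1) / 2) ^ (p - 1) = ((x + 1) / 2) ^ (p - 2) * ((x + 1) / 2) := by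
    rw [← rpow_add_one hA]; ring_nf
  rw [show p - 1 - 1 = p - 2 by ring, hpow]
  field_simp
  ring

theorem stmt_5 (t p : ℝ) (ht : 1 ≤ t) (hp0 : 0 < p) (hp1 : p < 1) :
    (4 / p) * (((t + 1) / 2) ^ p - 1) - (4 / (p - 1)) * (((t + 1) / 2) ^ (p - 1) - 1) ≤
    (t ^ p - 1) / (p * (p - 1)) - (t - 1) / (p - 1) := by
  change kp p t ≤ cp p t
  have key := le_of_hasDerivAt_nonneg ht (f := cp p - kp p)
    (fun x hx ↦ (hasDerivAt_cp hp0.ne' hp1.ne (by linarith [hx.1])).sub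
      (hasDerivAt_kp hp0.ne' hp1.ne (by linarith [hx.1])))
    (fun x hx ↦ by
      have hmid := sub_mul_rpow_midpoint_le one_pos hx.1.le (sub_ne_zero.2 hp1.ne) (by linarith)
      rw [one_rpow, add_comm 1 x, show p - 1 - 1 = p - 2 by ring] at hmid
      linarith)
  simpa using key
end

section
/- Let c ∈ ℝ and g(x) = 1 − x + x·log x − c·x·(log x)² for x > 0. Then g(x) ≥ 0 if (a) 0 < x ≤ 1 and 0 < c ≤ 1/2, or (b) 1 ≤ x ≤ exp((1−2c)/c) and 0 < c ≤ 1/2, or (c) x > 0 and c ≤ 0. Also g(x) ≤ 0 if (d) exp((1−2c)/c) ≤ x ≤ 1 and c ≥ 1/2, or (e) x ≥ 1 and c ≥ 1/2. -/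
/-!
With `g c x = 1 - x + x log x - c x (log x)²` we have `g c 1 = 0` and
`g' x = (log x) (1 - 2c - c log x)`. For `c > 0` the sign of `g'` is constant between `x` and `1`
in each case, so `g c x` compares with `g c 1 = 0` by monotonicity. For `c ≤ 0` it suffices that
`1 - x + x log x ≥ 0`.
-/

open Real Set

noncomputable def g (c x : ℝ) : ℝ := 1 - x + x * log x - c * x * log x ^ 2

lemma g_one (c : ℝ) : g c 1 = 0 := by
  simp [g]

lemma hasDerivAt_g (c : ℝ) {x : ℝ} (hx : x ≠ 0) :
    HasDerivAt (g c) (log x * (1 - 2 * c - c * log x)) x := by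
  have hlog := hasDerivAt_log hx
  refine ((((hasDerivAt_id' x).const_sub 1).fun_add ((hasDerivAt_id' x).fun_mul hlog)).fun_sub
    (((hasDerivAt_id' x).const_mul c).fun_mul (hlog.fun_pow 2))).congr_deriv ?_
  field_simp
  ring

lemma monotoneOn_g {c a b : ℝ} (ha : 0 < a)
    (h : ∀ y ∈ Ioo a b, 0 ≤ log y * (1 - 2 * c - c * log y)) :
    MonotoneOn (g c) (Icc a b) := by
  have hderiv : ∀ y ∈ Icc a b, HasDerivAt (g c) (log y * (1 - 2 * c - c * log y)) y :=
    fun y hy => hasDerivAt_g c (ha.trans_le hy.1).ne'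
  refine monotoneOn_of_hasDerivWithinAt_nonneg (convex_Icc a b)
    (f' := fun y => log y * (1 - 2 * c - c * log y))
    (fun y hy => (hderiv y hy).continuousAt.continuousWithinAt) (fun y hy => ?_) ?_
  · exact (hderiv y (interior_subset hy)).hasDerivWithinAt
  · rwa [interior_Icc]

lemma antitoneOn_g {c a b : ℝ} (ha : 0 < a)
    (h : ∀ y ∈ Ioo a b, log y * (1 - 2 * c - c * log y) ≤ 0) :
    AntitoneOn (g c) (Icc a b) := by
  have hderiv : ∀ y ∈ Icc a b, HasDerivAt (g c) (log y * (1 - 2 * c - c * log y)) y :=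
    fun y hy => hasDerivAt_g c (ha.trans_le hy.1).ne'
  refine antitoneOn_of_hasDerivWithinAt_nonpos (convex_Icc a b)
    (f' := fun y => log y * (1 - 2 * c - c * log y))
    (fun y hy => (hderiv y hy).continuousAt.continuousWithinAt) (fun y hy => ?_) ?_
  · exact (hderiv y (interior_subset hy)).hasDerivWithinAt
  · rwa [interior_Icc]

lemma g_nonneg_of_le_one {c x : ℝ} (hx : 0 < x) (hx1 : x ≤ 1) (hc0 : 0 ≤ c) (hc : c ≤ 1 / 2) :
    0 ≤ g c x := by
  have hanti : AntitoneOn (g c) (Icc x 1) := antitoneOn_g hx fun y hy => by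
    have hlog : log y < 0 := log_neg (hx.trans hy.1) hy.2
    exact mul_nonpos_of_nonpos_of_nonneg hlog.le (by nlinarith)
  simpa [g_one] using hanti ⟨le_rfl, hx1⟩ ⟨hx1, le_rfl⟩ hx1

lemma g_nonneg_of_one_le {c x : ℝ} (hx1 : 1 ≤ x) (hc0 : 0 ≤ c) (hcx : c * log x ≤ 1 - 2 * c) :
    0 ≤ g c x := by
  have hmono : MonotoneOn (g c) (Icc 1 x) := monotoneOn_g one_pos fun y hy => by
    have hlog : 0 < log y := log_pos hy.1
    have : log y ≤ log x := log_le_log (one_pos.trans hy.1) hy.2.le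
    exact mul_nonneg hlog.le (by nlinarith)
  simpa [g_one] using hmono ⟨le_rfl, hx1⟩ ⟨hx1, le_rfl⟩ hx1

lemma g_nonneg_of_nonpos {c x : ℝ} (hx : 0 < x) (hc : c ≤ 0) : 0 ≤ g c x := by
  have hxlogx : x - 1 ≤ x * log x := by
    have := mul_le_mul_of_nonneg_left (one_sub_inv_le_log_of_pos hx) hx.le
    rwa [mul_sub, mul_inv_cancel₀ hx.ne', mul_one] at this
  have : 0 ≤ -c * x * log x ^ 2 := mul_nonneg (mul_nonneg (neg_nonneg.2 hc) hx.le) (sq_nonneg _)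
  unfold g
  linarith

lemma g_nonpos_of_le_one {c x : ℝ} (hx : 0 < x) (hx1 : x ≤ 1) (hc0 : 0 ≤ c)
    (hcx : 1 - 2 * c ≤ c * log x) : g c x ≤ 0 := by
  have hmono : MonotoneOn (g c) (Icc x 1) := monotoneOn_g hx fun y hy => by
    have hlog : log y < 0 := log_neg (hx.trans hy.1) hy.2
    have : log x ≤ log y := log_le_log hx hy.1.le
    exact mul_nonneg_of_nonpos_of_nonpos hlog.le (by nlinarith)
  simpa [g_one] using hmono ⟨le_rfl, hx1⟩ ⟨hx1, le_rfl⟩ hx1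

lemma g_nonpos_of_one_le {c x : ℝ} (hx1 : 1 ≤ x) (hc : 1 / 2 ≤ c) : g c x ≤ 0 := by
  have hanti : AntitoneOn (g c) (Icc 1 x) := antitoneOn_g one_pos fun y hy => by
    have hlog : 0 < log y := log_pos hy.1
    exact mul_nonpos_of_nonneg_of_nonpos hlog.le (by nlinarith)
  simpa [g_one] using hanti ⟨le_rfl, hx1⟩ ⟨hx1, le_rfl⟩ hx1

lemma mul_log_le_iff_le_exp {b c x : ℝ} (hx : 0 < x) (hc : 0 < c) :
    c * log x ≤ b ↔ x ≤ exp (b / c) := by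
  rw [← log_le_iff_le_exp hx, le_div_iff₀ hc, mul_comm]

lemma le_mul_log_iff_exp_le {b c x : ℝ} (hx : 0 < x) (hc : 0 < c) :
    b ≤ c * log x ↔ exp (b / c) ≤ x := by
  rw [← le_log_iff_exp_le hx, div_le_iff₀ hc, mul_comm]

theorem stmt_11 (c x : ℝ) (hx : 0 < x) :
    (((x ≤ 1 ∧ 0 < c ∧ c ≤ 1 / 2) ∨
      (1 ≤ x ∧ x ≤ Real.exp ((1 - 2 * c) / c) ∧ 0 < c ∧ c ≤ 1 / 2) ∨
      c ≤ 0) →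
      0 ≤ 1 - x + x * Real.log x - c * x * (Real.log x) ^ 2) ∧
    (((Real.exp ((1 - 2 * c) / c) ≤ x ∧ x ≤ 1 ∧ 1 / 2 ≤ c) ∨
      (1 ≤ x ∧ 1 / 2 ≤ c)) →
      1 - x + x * Real.log x - c * x * (Real.log x) ^ 2 ≤ 0) := by
  refine ⟨?_, ?_⟩
  · rintro (⟨hx1, hc0, hc⟩ | ⟨hx1, hxexp, hc0, -⟩ | hc)
    · exact g_nonneg_of_le_one hx hx1 hc0.le hc
    · exact g_nonneg_of_one_le hx1 hc0.le ((mul_log_le_iff_le_exp hx hc0).2 hxexp)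
    · exact g_nonneg_of_nonpos hx hc
  · rintro (⟨hxexp, hx1, hc⟩ | ⟨hx1, hc⟩)
    · have hc0 : 0 < c := by linarith
      exact g_nonpos_of_le_one hx hx1 hc0.le ((le_mul_log_iff_exp_le hx hc0).2 hxexp)
    · exact g_nonpos_of_one_le hx1 hc
end

section
/- For 0 < x ≤ 1 and 0 < p ≤ q < 1, one has ((1−p) + px − x^p)/(p(1−p)) ≥ ((1−q) + qx − x^q)/(q(1−q)). For x ≥ 1 the reversed inequality holds. -/
/-!
Write `F_p(x) = ((1 - p) + p x - x ^ p) / (p (1 - p))`. Then `F_p(x) = ∫_x^1 (t^(p-1) - 1) / (1 - p) dt`,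
and the integrand decreases in `p` for every `t > 0`: up to sign it is the slope of the convex
function `a ↦ t ^ a` between `0` and `p - 1`. Integrating over `[x, 1]` gives the first inequality;
for `x ≥ 1` the orientation of the interval flips and so does the inequality.
-/

open Real intervalIntegral

lemma rpow_sub_one_div_le_rpow_sub_one_div {t a b : ℝ} (ht : 0 < t) (ha : a ≠ 0) (hb : b ≠ 0)
    (hab : a ≤ b) : (t ^ a - 1) / a ≤ (t ^ b - 1) / b := by
  simpa using (convexOn_rpow_left ht).secant_mono (a := 0) trivial trivial trivial ha hb hab

lemma rpow_sub_one_div_one_sub_antitone {t p q : ℝ} (ht : 0 < t) (hpq : p ≤ q) (hq : q < 1) :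
    (t ^ (q - 1) - 1) / (1 - q) ≤ (t ^ (p - 1) - 1) / (1 - p) := by
  have h := rpow_sub_one_div_le_rpow_sub_one_div ht (a := p - 1) (b := q - 1)
    (by linarith) (by linarith) (by linarith)
  have h_neg (r : ℝ) : (t ^ (r - 1) - 1) / (1 - r) = -((t ^ (r - 1) - 1) / (r - 1)) := by
    rw [← div_neg, neg_sub]
  rw [h_neg p, h_neg q]
  exact neg_le_neg h

lemma intervalIntegrable_rpow_sub_one_div {p : ℝ} (hp : 0 < p) (a b : ℝ) :
    IntervalIntegrable (fun t : ℝ => (t ^ (p - 1) - 1) / (1 - p)) MeasureTheory.volume a b :=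
  ((intervalIntegrable_rpow' (by linarith)).sub intervalIntegrable_const).div_const _

lemma integral_rpow_sub_one_div {p : ℝ} (hp : 0 < p) (hp1 : p < 1) (x : ℝ) :
    ∫ t in x..1, (t ^ (p - 1) - 1) / (1 - p) = ((1 - p) + p * x - x ^ p) / (p * (1 - p)) := by
  have h1p : 1 - p ≠ 0 := by linarith
  rw [integral_div, integral_sub (intervalIntegrable_rpow' (by linarith)) intervalIntegrable_const,
    integral_rpow (Or.inl (by linarith)), integral_const, sub_add_cancel, one_rpow]
  field_simp
  ring

theorem stmt_15 (x p q : ℝ) (hp : 0 < p) (hpq : p ≤ q) (hq : q < 1) :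
    (0 < x → x ≤ 1 →
      ((1 - q) + q * x - x ^ q) / (q * (1 - q)) ≤
        ((1 - p) + p * x - x ^ p) / (p * (1 - p))) ∧
    (1 ≤ x →
      ((1 - p) + p * x - x ^ p) / (p * (1 - p)) ≤
        ((1 - q) + q * x - x ^ q) / (q * (1 - q))) := by
  have hq0 : 0 < q := hp.trans_le hpq
  rw [← integral_rpow_sub_one_div hp (hpq.trans_lt hq), ← integral_rpow_sub_one_div hq0 hq]
  constructor
  · intro hx0 hx1
    exact integral_mono_on hx1 (intervalIntegrable_rpow_sub_one_div hq0 x 1)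
      (intervalIntegrable_rpow_sub_one_div hp x 1)
      fun t ht => rpow_sub_one_div_one_sub_antitone (hx0.trans_le ht.1) hpq hq
  · intro hx1
    rw [integral_symm 1 x, integral_symm 1 x, neg_le_neg_iff]
    exact integral_mono_on hx1 (intervalIntegrable_rpow_sub_one_div hq0 1 x)
      (intervalIntegrable_rpow_sub_one_div hp 1 x)
      fun t ht => rpow_sub_one_div_one_sub_antitone (one_pos.trans_le ht.1) hpq hq
end

section
/- For 0 < x ≤ 1 and 0 < p ≤ q ≤ 1, one has (1/p)·(x^p − x/((1−p)x + p)) ≥ (1/q)·(x^q − x/((1−q)x + q)). -/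
/-!
Write `G_p = x ^ p` and `H_p = ((1 - p) + p x⁻¹)⁻¹` for the weighted geometric and harmonic means
of `1` and `x`. Then `(G_p - H_p) / p = G_p H_p · (H_p⁻¹ - G_p⁻¹) / p`. For `0 < x ≤ 1` both means
decrease in `p`, and `(H_p⁻¹ - G_p⁻¹) / p = (x⁻¹ - 1) - ((x⁻¹) ^ p - 1) / p` decreases in `p` because
`p ↦ (x⁻¹) ^ p` is convex; it vanishes at `p = 1`, so it is nonnegative on `(0, 1]`. The product of
two nonnegative nonincreasing factors is nonincreasing.
-/

open Real

noncomputable def harmMean (p x : ℝ) : ℝ := ((1 - p) + p * x⁻¹)⁻¹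

lemma rpow_sub_one_div_le_rpow_sub_one_div_s16 {y p q : ℝ} (hy : 0 < y) (hp : 0 < p) (hpq : p ≤ q) :
    (y ^ p - 1) / p ≤ (y ^ q - 1) / q := by
  simpa using (convexOn_rpow_left hy).secant_mono (a := 0) trivial trivial trivial
    hp.ne' (hp.trans_le hpq).ne' hpq

section

variable {x p q : ℝ}

lemma div_eq_harmMean (hx : x ≠ 0) : x / ((1 - p) * x + p) = harmMean p x := by
  rw [harmMean, ← inv_div]
  congr 1
  field_simp

lemma harmMean_pos (hx : 0 < x) (hp : 0 ≤ p) (hp1 : p ≤ 1) : 0 < harmMean p x := by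
  have := inv_pos.2 hx
  exact inv_pos.2 (by nlinarith [mul_nonneg hp this.le, mul_nonneg (sub_nonneg.2 hp1) this.le])

lemma harmMean_le_harmMean (hx0 : 0 < x) (hx1 : x ≤ 1) (hp : 0 ≤ p) (hpq : p ≤ q) (hq : q ≤ 1) :
    harmMean q x ≤ harmMean p x := by
  have hx_inv : 1 ≤ x⁻¹ := one_le_inv₀ hx0 |>.2 hx1
  refine inv_anti₀ (inv_pos.1 (harmMean_pos hx0 hp (hpq.trans hq))) ?_
  nlinarith

lemma inv_harmMean_sub_inv_rpow_div_le (hx : 0 < x) (hp : 0 < p) (hpq : p ≤ q) :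
    ((harmMean q x)⁻¹ - (x ^ q)⁻¹) / q ≤ ((harmMean p x)⁻¹ - (x ^ p)⁻¹) / p := by
  have hslope := rpow_sub_one_div_le_rpow_sub_one_div_s16 (inv_pos.2 hx) hp hpq
  have hsplit : ∀ r : ℝ, r ≠ 0 → ((harmMean r x)⁻¹ - (x ^ r)⁻¹) / r =
      (x⁻¹ - 1) - (x⁻¹ ^ r - 1) / r := by
    intro r hr
    rw [harmMean, inv_inv, inv_rpow hx.le]
    field_simp
    ring
  rw [hsplit p hp.ne', hsplit q (hp.trans_le hpq).ne']
  linarith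

lemma inv_harmMean_sub_inv_rpow_div_nonneg (hx : 0 < x) (hq : 0 < q) (hq1 : q ≤ 1) :
    0 ≤ ((harmMean q x)⁻¹ - (x ^ q)⁻¹) / q := by
  simpa [harmMean] using inv_harmMean_sub_inv_rpow_div_le hx hq hq1

lemma rpow_mul_harmMean_le (hx0 : 0 < x) (hx1 : x ≤ 1) (hp : 0 ≤ p) (hpq : p ≤ q) (hq : q ≤ 1) :
    x ^ q * harmMean q x ≤ x ^ p * harmMean p x :=
  mul_le_mul (rpow_le_rpow_of_exponent_ge hx0 hx1 hpq)
    (harmMean_le_harmMean hx0 hx1 hp hpq hq)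
    (harmMean_pos hx0 (hp.trans hpq) hq).le (rpow_pos_of_pos hx0 p).le

lemma one_div_mul_rpow_sub_harmMean (hx : 0 < x) (hp : 0 < p) (hp1 : p ≤ 1) :
    1 / p * (x ^ p - harmMean p x) =
      x ^ p * harmMean p x * (((harmMean p x)⁻¹ - (x ^ p)⁻¹) / p) := by
  have hG := (rpow_pos_of_pos hx p).ne'
  have hH := (harmMean_pos hx hp.le hp1).ne'
  field_simp

end

theorem stmt_16 (x p q : ℝ) (hx0 : 0 < x) (hx1 : x ≤ 1)
    (hp : 0 < p) (hpq : p ≤ q) (hq : q ≤ 1) :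
    (1 / q) * (x ^ q - x / ((1 - q) * x + q)) ≤
      (1 / p) * (x ^ p - x / ((1 - p) * x + p)) := by
  have hq0 := hp.trans_le hpq
  rw [div_eq_harmMean hx0.ne', div_eq_harmMean hx0.ne', one_div_mul_rpow_sub_harmMean hx0 hq0 hq,
    one_div_mul_rpow_sub_harmMean hx0 hp (hpq.trans hq)]
  exact mul_le_mul (rpow_mul_harmMean_le hx0 hx1 hp.le hpq hq)
    (inv_harmMean_sub_inv_rpow_div_le hx0 hp hpq)
    (inv_harmMean_sub_inv_rpow_div_nonneg hx0 hq0 hq)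
    (mul_pos (rpow_pos_of_pos hx0 p) (harmMean_pos hx0 hp.le (hpq.trans hq))).le
end

section
/- Define f(x,p) = (1/p)·(x^p − x/((1−p)x + p)) + p·(log x)² for x > 0 and p ∈ (0,1]. If x ≥ 1 and 0 < p ≤ q ≤ 1/2, then f(x,p) ≤ f(x,q). Likewise if 0 < x ≤ 1 and 1/2 ≤ p ≤ q ≤ 1, then f(x,p) ≤ f(x,q). -/
/-!
Write the function as `(x ^ r - 1) / r + (1 - x) / D r + r * (log x) ^ 2` with `D r = (1 - r) x + r`.
The first term is a secant slope of the convex function `r ↦ x ^ r` through `r = 0`, hence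
monotone in `r`. For the rest, `D q - D p = (q - p)(1 - x)` gives the increment
`(q - p) ((log x) ^ 2 - (1 - x) ^ 2 / (D p * D q))`, which is nonnegative because under either
hypothesis `D r ≥ (x + 1) / 2` (arithmetic mean) and `|x - 1| ≤ (x + 1) / 2 * |log x|`
(logarithmic mean ≤ arithmetic mean).
-/

open Real

lemma Real.two_mul_div_add_two_le_log_one_add {a : ℝ} (ha : 0 ≤ a) :
    2 * (a / (a + 2)) ≤ log (1 + a) := by
  simpa using le_hasSum (hasSum_log_one_add ha) 0 fun k _ ↦ by positivity

lemma Real.abs_sub_one_le_mul_abs_log {x : ℝ} (hx : 0 < x) :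
    |x - 1| ≤ (x + 1) / 2 * |log x| := by
  have key : ∀ y, 1 ≤ y → y - 1 ≤ (y + 1) / 2 * log y := fun y hy ↦ by
    have := two_mul_div_add_two_le_log_one_add (sub_nonneg.2 hy)
    rw [add_sub_cancel, show y - 1 + 2 = y + 1 by ring, mul_div_assoc',
      div_le_iff₀ (by linarith)] at this
    linarith
  rcases le_total 1 x with h1 | h1
  · rw [abs_of_nonneg (sub_nonneg.2 h1), abs_of_nonneg (log_nonneg h1)]
    exact key x h1
  · rw [abs_of_nonpos (sub_nonpos.2 h1), abs_of_nonpos (log_nonpos hx.le h1)]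
    calc -(x - 1) = x * (x⁻¹ - 1) := by field_simp; ring
      _ ≤ x * ((x⁻¹ + 1) / 2 * log x⁻¹) := by gcongr; exact key _ ((one_le_inv₀ hx).2 h1)
      _ = (x + 1) / 2 * -log x := by rw [log_inv]; field_simp; ring

lemma Real.rpow_sub_one_div_le {x p q : ℝ} (hx : 0 < x) (hp : p ≠ 0) (hq : q ≠ 0)
    (hpq : p ≤ q) : (x ^ p - 1) / p ≤ (x ^ q - 1) / q := by
  simpa using (convexOn_rpow_left hx).secant_mono (a := 0) trivial trivial trivial hp hq hpq

lemma div_add_mul_log_sq_le {x p q : ℝ} (hx : 0 < x) (hpq : p ≤ q)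
    (hp : (x + 1) / 2 ≤ (1 - p) * x + p) (hq : (x + 1) / 2 ≤ (1 - q) * x + q) :
    (1 - x) / ((1 - p) * x + p) + p * log x ^ 2 ≤ (1 - x) / ((1 - q) * x + q) + q * log x ^ 2 := by
  set Dp := (1 - p) * x + p
  set Dq := (1 - q) * x + q
  have hDp : 0 < Dp := by linarith
  have hDq : 0 < Dq := by linarith
  have hsq : (1 - x) ^ 2 ≤ Dp * Dq * log x ^ 2 := calc
    (1 - x) ^ 2 = |x - 1| ^ 2 := by rw [sq_abs, ← neg_sub, neg_sq]
    _ ≤ ((x + 1) / 2 * |log x|) ^ 2 := by gcongr; exact abs_sub_one_le_mul_abs_log hx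
    _ ≤ Dp * Dq * log x ^ 2 := by
      rw [mul_pow, sq_abs, sq]
      gcongr
  have hdiff : (1 - x) / Dq + q * log x ^ 2 - ((1 - x) / Dp + p * log x ^ 2) =
      (q - p) * (Dp * Dq * log x ^ 2 - (1 - x) ^ 2) / (Dp * Dq) := by
    field_simp; ring
  have hnonneg : 0 ≤ (q - p) * (Dp * Dq * log x ^ 2 - (1 - x) ^ 2) / (Dp * Dq) :=
    div_nonneg (mul_nonneg (by linarith) (by linarith)) (by positivity)
  linarith

lemma one_div_mul_rpow_sub_div_add_eq {x r L : ℝ} (hr : r ≠ 0) (hD : (1 - r) * x + r ≠ 0) :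
    1 / r * (x ^ r - x / ((1 - r) * x + r)) + r * L =
      (x ^ r - 1) / r + ((1 - x) / ((1 - r) * x + r) + r * L) := by
  generalize hD' : (1 - r) * x + r = D at hD
  field_simp
  linear_combination -hD'

theorem stmt_19_general (x p q : ℝ) (hx : 0 < x) (hp : 0 < p) (hpq : p ≤ q)
    (h : (1 ≤ x ∧ q ≤ 1 / 2) ∨ (x ≤ 1 ∧ 1 / 2 ≤ p)) :
    (1 / p) * (x ^ p - x / ((1 - p) * x + p)) + p * (Real.log x) ^ 2 ≤
      (1 / q) * (x ^ q - x / ((1 - q) * x + q)) + q * (Real.log x) ^ 2 := by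
  have hD : ∀ r, p ≤ r → r ≤ q → (x + 1) / 2 ≤ (1 - r) * x + r := by
    rintro r hpr hrq
    rcases h with ⟨hx1, hq2⟩ | ⟨hx1, hp2⟩ <;> nlinarith
  have hDp := hD p le_rfl hpq
  have hDq := hD q hpq le_rfl
  rw [one_div_mul_rpow_sub_div_add_eq hp.ne' (by linarith),
    one_div_mul_rpow_sub_div_add_eq (hp.trans_le hpq).ne' (by linarith)]
  exact add_le_add (rpow_sub_one_div_le hx hp.ne' (hp.trans_le hpq).ne' hpq)
    (div_add_mul_log_sq_le hx hpq hDp hDq)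

theorem stmt_19 (x p q : ℝ) (hx : 0 < x) (hp : 0 < p) (hpq : p ≤ q) (hq : q ≤ 1)
    (h : (1 ≤ x ∧ q ≤ 1 / 2) ∨ (x ≤ 1 ∧ 1 / 2 ≤ p)) :
    (1 / p) * (x ^ p - x / ((1 - p) * x + p)) + p * (Real.log x) ^ 2 ≤
      (1 / q) * (x ^ q - x / ((1 - q) * x + q)) + q * (Real.log x) ^ 2 :=
  stmt_19_general x p q hx hp hpq h
end
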